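/- Consider the two-agent, single-state, one-step Markov game with action sets A₁ = A₂ = {Cooperate, Defect} and common mean reward R(C,C) = 1, R(C,D) = R(D,C) = 0.5, R(D,D) = 0.1 (both agents receive the same reward). Let 𝔸 be any Markov action manipulation, i.e., for each joint action a a probability distribution 𝔸(·|a) over joint actions, and let r̃(a) = E_{a'∼𝔸(·|a)}[R(a')] be the post-attack mean reward. Fix ε > 0. Suppose (Defect, Defect) is a Nash equilibrium of the post-attack game, i.e., r̃(C,D) ≤ r̃(D,D) and r̃(D,C) ≤ r̃(D,D), and that none of the other three pure product policies is an ε-approximate coarse correlated equilibrium, i.e., (r̃(C,C) > r̃(C,D) + ε or r̃(D,D) > r̃(C,D) + ε), (r̃(C,C) > r̃(D,C) + ε or r̃(D,D) > r̃(D,C) + ε), and (r̃(D,C) > r̃(C,C) + ε or r̃(C,D) > r̃(C,C) + ε). Then 𝔸((D,D)|(D,D)) < 1 − ε; that is, when the agents play the target joint action (Defect, Defect), the attacker must alter it with probability greater than ε. -/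

import Mathlib

/-- The two actions of each agent. -/
inductive Act where
  | C : Act  -- Cooperate
  | D : Act  -- Defect
deriving DecidableEq

instance : Fintype Act where
  elems := {Act.C, Act.D}
  complete := by intro x; cases x <;> simp

open Act

/-- The common mean reward of the one-step two-agent Markov game. -/
noncomputable def Rpre : Act × Act → ℝ
  | (C, C) => 1
  | (C, D) => 0.5
  | (D, C) => 0.5
  | (D, D) => 0.1

/-!
The third condition together with the Nash condition forces `r̃(D,D) > r̃(C,C) + ε`, and
`r̃(C,C) ≥ min R = 0.1`. On the other hand `R ≤ 1` and `R(D,D) = 0.1`, so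
`r̃(D,D) ≤ 1 - 0.9 𝔸((D,D)|(D,D))`; comparing the two bounds gives the claim.
-/

section WeightedSum

variable {ι : Type*} [Fintype ι] {w f : ι → ℝ}

lemma le_sum_mul_of_forall_le {m : ℝ} (hw : ∀ i, 0 ≤ w i) (hw1 : ∑ i, w i = 1)
    (hf : ∀ i, m ≤ f i) : m ≤ ∑ i, w i * f i := by
  have : 0 ≤ ∑ i, w i * (f i - m) :=
    Finset.sum_nonneg fun i _ => mul_nonneg (hw i) (sub_nonneg.2 (hf i))
  simp only [mul_sub, Finset.sum_sub_distrib, ← Finset.sum_mul, hw1, one_mul] at this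
  linarith

lemma sum_mul_le_sub_mul_of_forall_le {M : ℝ} (hw : ∀ i, 0 ≤ w i) (hw1 : ∑ i, w i = 1)
    (hf : ∀ i, f i ≤ M) (j : ι) : ∑ i, w i * f i ≤ M - (M - f j) * w j := by
  have : w j * (M - f j) ≤ ∑ i, w i * (M - f i) :=
    Finset.single_le_sum (fun i _ => mul_nonneg (hw i) (sub_nonneg.2 (hf i)))
      (Finset.mem_univ j)
  simp only [mul_sub, Finset.sum_sub_distrib, ← Finset.sum_mul, hw1, one_mul] at this
  linarith

end WeightedSum

lemma Rpre_mem_Icc (a : Act × Act) : Rpre a ∈ Set.Icc (0.1 : ℝ) 1 := by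
  rcases a with ⟨_ | _, _ | _⟩ <;> norm_num [Rpre]

theorem stmt1_general (ε : ℝ) (hε : 0 < ε)
    (𝔸 : Act × Act → Act × Act → ℝ)
    (hA0 : ∀ a a', 0 ≤ 𝔸 a a') (hA1 : ∀ a, ∑ a', 𝔸 a a' = 1)
    (rt : Act × Act → ℝ) (hrt : ∀ a, rt a = ∑ a', 𝔸 a a' * Rpre a')
    (hNE1 : rt (C, D) ≤ rt (D, D)) (hNE2 : rt (D, C) ≤ rt (D, D))
    (h3 : rt (D, C) > rt (C, C) + ε ∨ rt (C, D) > rt (C, C) + ε) :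
    𝔸 (D, D) (D, D) < 1 - ε := by
  have hDD : rt (C, C) + ε < rt (D, D) := by rcases h3 with h | h <;> linarith
  have hCC : 0.1 ≤ rt (C, C) := by
    rw [hrt]
    exact le_sum_mul_of_forall_le (hA0 _) (hA1 _) fun a => (Rpre_mem_Icc a).1
  have hUB : rt (D, D) ≤ 1 - (1 - 0.1) * 𝔸 (D, D) (D, D) := by
    rw [hrt]
    exact sum_mul_le_sub_mul_of_forall_le (hA0 _) (hA1 _) (fun a => (Rpre_mem_Icc a).2) (D, D)
  linarith

/-- For the prisoner's-dilemma-like game `Rpre` with target policy (Defect, Defect):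
any Markov action manipulation `𝔸` whose post-attack mean rewards `rt` make the target
policy a Nash equilibrium while no other pure product policy is an `ε`-approximate CCE
must alter the target joint action with probability greater than `ε`. -/
theorem stmt1 (ε : ℝ) (hε : 0 < ε)
    (𝔸 : Act × Act → Act × Act → ℝ)
    (hA0 : ∀ a a', 0 ≤ 𝔸 a a') (hA1 : ∀ a, ∑ a', 𝔸 a a' = 1)
    (rt : Act × Act → ℝ) (hrt : ∀ a, rt a = ∑ a', 𝔸 a a' * Rpre a')
    (hNE1 : rt (C, D) ≤ rt (D, D)) (hNE2 : rt (D, C) ≤ rt (D, D))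
    (h1 : rt (C, C) > rt (C, D) + ε ∨ rt (D, D) > rt (C, D) + ε)
    (h2 : rt (C, C) > rt (D, C) + ε ∨ rt (D, D) > rt (D, C) + ε)
    (h3 : rt (D, C) > rt (C, C) + ε ∨ rt (C, D) > rt (C, C) + ε) :
    𝔸 (D, D) (D, D) < 1 - ε :=
  stmt1_general ε hε 𝔸 hA0 hA1 rt hrt hNE1 hNE2 h3
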